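/- arXiv:2101.03845 — 4 statements merged into one kernel-verified Lean document; each statement's English description precedes it below -/
import Mathlib

section
/- Let v = (v₁, v₂, v₃) ∈ ℂ³ with (v₁, v₂) ≠ (0, 0) and v₃ ≠ 0. Then there exists A ∈ U(2) such that, writing (w₁, w₂) = A·(v₁, v₂) and w₃ = det(A)⁻¹·v₃, one has w₂ = 0 and w₃/w₁ ∈ ℝ_{>0}. Moreover, such an A is unique up to left multiplication by an element of the subgroup {diag(e^{iθ}, e^{−2iθ}) : θ ∈ ℝ} ⊂ U(2). -/
noncomputable section

open Matrix

/-- `A ∈ U(2)` puts the vector `(v₁, v₂, v₃)` in normal form: writing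
`(w₁, w₂) = A·(v₁, v₂)` and `w₃ = det(A)⁻¹ · v₃`, one has `w₂ = 0` and
`w₃ / w₁ ∈ ℝ_{>0}` (expressed as `w₃ = r · w₁` for some real `r > 0`). -/
def NormalForm (v₁ v₂ v₃ : ℂ) (A : Matrix (Fin 2) (Fin 2) ℂ) : Prop :=
  A.mulVec ![v₁, v₂] 1 = 0 ∧
    ∃ r : ℝ, 0 < r ∧ (A.det)⁻¹ * v₃ = (r : ℂ) * A.mulVec ![v₁, v₂] 0

set_option maxHeartbeats 1000000 in
theorem normal_form_exists_unique_up_to_K'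
    (v₁ v₂ v₃ : ℂ) (hv : ¬(v₁ = 0 ∧ v₂ = 0)) (hv₃ : v₃ ≠ 0) :
    (∃ A ∈ Matrix.unitaryGroup (Fin 2) ℂ, NormalForm v₁ v₂ v₃ A) ∧
    (∀ A ∈ Matrix.unitaryGroup (Fin 2) ℂ, ∀ A' ∈ Matrix.unitaryGroup (Fin 2) ℂ,
      NormalForm v₁ v₂ v₃ A → NormalForm v₁ v₂ v₃ A' →
      ∃ θ : ℝ,
        A' = Matrix.diagonal
          ![Complex.exp (θ * Complex.I), Complex.exp (-2 * θ * Complex.I)] * A) := by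
  constructor
  · have hN : 0 < Complex.normSq v₁ + Complex.normSq v₂ := by
      have h1 := Complex.normSq_nonneg v₁
      have h2 := Complex.normSq_nonneg v₂
      rcases not_and_or.mp hv with h | h
      · have := Complex.normSq_pos.mpr h; linarith
      · have := Complex.normSq_pos.mpr h; linarith
    set n : ℝ := Real.sqrt (Complex.normSq v₁ + Complex.normSq v₂) with hn_def
    have hn : 0 < n := Real.sqrt_pos.mpr hN
    have hnC : (n : ℂ) ≠ 0 := by exact_mod_cast hn.ne'
    have hnn : (n : ℂ) * n = v₁ * (starRingEnd ℂ) v₁ + v₂ * (starRingEnd ℂ) v₂ := by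
      rw [Complex.mul_conj, Complex.mul_conj]
      norm_cast
      exact Real.mul_self_sqrt hN.le
    set u : ℂ := v₃ / ((‖v₃‖ : ℝ) : ℂ) with hu_def
    have habs : ‖v₃‖ ≠ 0 := norm_ne_zero_iff.mpr hv₃
    have hu : (starRingEnd ℂ) u * u = 1 := by
      rw [mul_comm, Complex.mul_conj, hu_def, Complex.normSq_div, Complex.normSq_ofReal,
        ← sq, ← Complex.normSq_eq_norm_sq, div_self (Complex.normSq_pos.mpr hv₃).ne']
      norm_num
    refine ⟨!![(starRingEnd ℂ) v₁ / n, (starRingEnd ℂ) v₂ / n; -(u*v₂)/n, u*v₁/n], ?_, ?_, ?_⟩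
    · rw [Matrix.mem_unitaryGroup_iff]
      ext i j
      fin_cases i <;> fin_cases j <;>
        simp [Matrix.mul_apply, Fin.sum_univ_two, Matrix.conjTranspose_apply,
          Matrix.one_apply] <;>
        field_simp
      · linear_combination -hnn
      · ring
      · ring
      · linear_combination (v₂ * (starRingEnd ℂ) v₂ + v₁ * (starRingEnd ℂ) v₁) * hu - hnn
    · show _ = 0
      simp [Matrix.mulVec, dotProduct, Fin.sum_univ_two]
      ring
    · refine ⟨‖v₃‖ / n, by positivity, ?_⟩
      have hdet : (!![(starRingEnd ℂ) v₁ / n, (starRingEnd ℂ) v₂ / n; -(u*v₂)/n, u*v₁/n] :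
          Matrix (Fin 2) (Fin 2) ℂ).det = u := by
        rw [Matrix.det_fin_two_of]
        field_simp
        linear_combination (-u) * hnn
      have hw0 : (!![(starRingEnd ℂ) v₁ / n, (starRingEnd ℂ) v₂ / n; -(u*v₂)/n, u*v₁/n] :
          Matrix (Fin 2) (Fin 2) ℂ).mulVec ![v₁, v₂] 0 = n := by
        simp [Matrix.mulVec, dotProduct, Fin.sum_univ_two]
        field_simp
        linear_combination -hnn
      rw [hdet, hw0, hu_def, inv_div]
      field_simp
      push_cast
      field_simp
  · rintro A hA A' hA' ⟨h1, r, hr, h2⟩ ⟨h1', r', hr', h2'⟩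
    have hsA : star A * A = 1 := Matrix.mem_unitaryGroup_iff'.mp hA
    have hAsA : A * star A = 1 := Matrix.mem_unitaryGroup_iff.mp hA
    set B : Matrix (Fin 2) (Fin 2) ℂ := A' * star A with hB_def
    have hB : B ∈ Matrix.unitaryGroup (Fin 2) ℂ := mul_mem hA' (Unitary.star_mem hA)
    have hBA : B * A = A' := by rw [hB_def, mul_assoc, hsA, mul_one]
    set w : Fin 2 → ℂ := A.mulVec ![v₁, v₂] with hw_def
    set w' : Fin 2 → ℂ := A'.mulVec ![v₁, v₂] with hw'_def
    have hBw : B.mulVec w = w' := by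
      rw [hw_def, hw'_def, Matrix.mulVec_mulVec, hB_def, mul_assoc, hsA, mul_one]
    have hw0 : w 0 ≠ 0 := by
      intro h0
      have hwz : w = 0 := by
        funext i; fin_cases i
        · exact h0
        · exact h1
      have : (![v₁, v₂] : Fin 2 → ℂ) = 0 := by
        have h := congrArg (fun M => Matrix.mulVec M ![v₁, v₂]) hsA
        simp only [← Matrix.mulVec_mulVec, Matrix.one_mulVec] at h
        rw [← h, ← hw_def, hwz, Matrix.mulVec_zero]
      exact hv ⟨congrFun this 0, congrFun this 1⟩
    -- components of B·w
    have hcomp : ∀ i, w' i = B i 0 * w 0 := by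
      intro i
      rw [← hBw]
      simp only [Matrix.mulVec, dotProduct, Fin.sum_univ_two]
      rw [h1, mul_zero, add_zero]
    have hB10 : B 1 0 = 0 := by
      have := hcomp 1
      rw [h1'] at this
      exact (mul_eq_zero.mp this.symm).resolve_right hw0
    -- unitarity of B, entrywise
    have hBB : B * star B = 1 := Matrix.mem_unitaryGroup_iff.mp hB
    set lam : ℂ := B 0 0 with hlam
    set mu : ℂ := B 1 1 with hmu
    have e11 : mu * (starRingEnd ℂ) mu = 1 := by
      have := congrFun (congrFun hBB 1) 1
      simp only [Matrix.mul_apply, Fin.sum_univ_two, Matrix.conjTranspose_apply,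
        Matrix.one_apply, Matrix.star_apply] at this
      rw [hB10] at this
      simpa using this
    have hmu0 : mu ≠ 0 := left_ne_zero_of_mul_eq_one e11
    have e01 : B 0 1 = 0 := by
      have := congrFun (congrFun hBB 0) 1
      simp only [Matrix.mul_apply, Fin.sum_univ_two, Matrix.conjTranspose_apply,
        Matrix.one_apply, Matrix.star_apply] at this
      rw [hB10] at this
      simp only [star_zero, mul_zero, zero_add, Complex.star_def] at this
      simp only [show ((0:Fin 2) = 1) = False by simp, if_false] at this
      have hstar : (starRingEnd ℂ) mu ≠ 0 := fun h => hmu0 (by simpa using congrArg (starRingEnd ℂ) h)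
      exact (mul_eq_zero.mp this).resolve_right hstar
    have e00 : lam * (starRingEnd ℂ) lam = 1 := by
      have := congrFun (congrFun hBB 0) 0
      simp only [Matrix.mul_apply, Fin.sum_univ_two, Matrix.conjTranspose_apply,
        Matrix.one_apply, Matrix.star_apply] at this
      rw [e01] at this
      simpa using this
    have hlam0 : lam ≠ 0 := left_ne_zero_of_mul_eq_one e00
    -- determinant facts
    have hdetA : A.det ≠ 0 := by
      intro h
      have := congrArg Matrix.det hAsA
      rw [Matrix.det_mul, h, zero_mul, Matrix.det_one] at this
      exact zero_ne_one this
    have hdetB : B.det = lam * mu := by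
      rw [Matrix.det_fin_two, hB10, e01]
      ring
    have hdetA' : A'.det = lam * mu * A.det := by
      rw [← hBA, Matrix.det_mul, hdetB]
    -- relation r = r' * lam^2 * mu
    have h2a : v₃ = (r : ℂ) * w 0 * A.det := by field_simp at h2; linear_combination h2
    have h2b : v₃ = (r' : ℂ) * w' 0 * A'.det := by
      have hdA' : A'.det ≠ 0 := by rw [hdetA']; exact mul_ne_zero (mul_ne_zero hlam0 hmu0) hdetA
      field_simp at h2'; linear_combination h2'
    have key : (r : ℂ) = (r' : ℂ) * (lam ^ 2 * mu) := by
      apply mul_right_cancel₀ (mul_ne_zero hw0 hdetA)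
      have h3 := h2a.symm.trans h2b
      rw [hcomp 0, hdetA'] at h3
      linear_combination h3
    -- moduli
    have hnl : Complex.normSq lam = 1 := by
      have := e00; rw [Complex.mul_conj] at this; exact_mod_cast this
    have hnm : Complex.normSq mu = 1 := by
      have := e11; rw [Complex.mul_conj] at this; exact_mod_cast this
    have habslam : ‖lam‖ = 1 := by
      rw [Complex.norm_def, hnl, Real.sqrt_one]
    have habsmu : ‖mu‖ = 1 := by
      rw [Complex.norm_def, hnm, Real.sqrt_one]
    have hrr' : r = r' := by
      have habskey := congrArg (fun z : ℂ => ‖z‖) key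
      simpa [_root_.map_mul, map_pow, Complex.norm_real, Real.norm_eq_abs, abs_of_pos hr, abs_of_pos hr',
        habslam, habsmu] using habskey
    have hr'0 : (r' : ℂ) ≠ 0 := by exact_mod_cast hr'.ne'
    have hlm : lam ^ 2 * mu = 1 := by
      have : (r' : ℂ) * 1 = (r' : ℂ) * (lam ^ 2 * mu) := by
        rw [mul_one]; rw [hrr'] at key; exact key
      exact (mul_left_cancel₀ hr'0 this).symm
    refine ⟨lam.arg, ?_⟩
    have hexp : Complex.exp (lam.arg * Complex.I) = lam := by
      have := Complex.norm_mul_exp_arg_mul_I lam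
      rwa [habslam, Complex.ofReal_one, one_mul] at this
    have hexp2 : Complex.exp (-2 * lam.arg * Complex.I) = mu := by
      have hsq : lam * lam = Complex.exp (lam.arg * Complex.I + lam.arg * Complex.I) := by
        rw [Complex.exp_add, hexp]
      have h4 : Complex.exp (-2 * lam.arg * Complex.I) * lam ^ 2 = 1 := by
        rw [sq, hsq, ← Complex.exp_add, ← Complex.exp_zero]
        congr 1
        push_cast
        ring
      calc Complex.exp (-2 * lam.arg * Complex.I)
          = Complex.exp (-2 * lam.arg * Complex.I) * (lam ^ 2 * mu) := by rw [hlm, mul_one]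
        _ = (Complex.exp (-2 * lam.arg * Complex.I) * lam ^ 2) * mu := by ring
        _ = mu := by rw [h4, one_mul]
    rw [← hBA]
    congr 1
    ext i j
    fin_cases i <;> fin_cases j <;>
      simp [Matrix.diagonal]
    · exact hexp.symm
    · exact e01
    · exact hB10
    · rw [show -(2 * (lam.arg : ℂ) * Complex.I) = -2 * (lam.arg : ℂ) * Complex.I by ring, hexp2]
end
end

section
/- Let ζ = [[i x₁ + j·conj(z₃), −conj(z₁)], [z₁, i x₂ + j w]] ∈ 𝔰𝔭(2) with x₁, x₂ ∈ ℝ and z₁, z₃, w ∈ ℂ satisfying z₁ ≠ 0, z₃/z₁ ∈ ℝ_{>0} and w ≠ 0. Then there exists A ∈ K = {diag(e^{iθ}, e^{3iθ}) : θ ∈ ℝ} ⊂ Sp(2) such that A ζ A⁻¹ ∈ 𝔯, and A is unique up to multiplication by an element of the subgroup K_F = {diag(e^{iθ}, e^{3iθ}) : e^{8iθ} = 1} ≅ ℤ/8ℤ. -/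
noncomputable section

open Matrix

/-- The complex number `a` viewed as a quaternion, `ℂ ⊂ ℍ = ℂ ⊕ jℂ`. -/
def Cq (a : ℂ) : Quaternion ℝ := ⟨a.re, a.im, 0, 0⟩

/-- The quaternion `j`. -/
def jq : Quaternion ℝ := ⟨0, 0, 1, 0⟩

/-- The quaternion `a + j b` for complex numbers `a, b`, via `ℍ = ℂ ⊕ jℂ`. -/
def toQuat (a b : ℂ) : Quaternion ℝ := Cq a + jq * Cq b

/-- The element `[[i x₁ + j conj(z₃), −conj(z₁)], [z₁, i x₂ + j w]]` of `𝔰𝔭(2)`. -/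
def sp2Elt (x₁ x₂ : ℝ) (z₁ z₃ w : ℂ) : Matrix (Fin 2) (Fin 2) (Quaternion ℝ) :=
  !![toQuat ((x₁ : ℂ) * Complex.I) (starRingEnd ℂ z₃), toQuat (-(starRingEnd ℂ z₁)) 0;
     toQuat z₁ 0, toQuat ((x₂ : ℂ) * Complex.I) w]

/-- The subset `𝔯 ⊂ 𝔰𝔭(2)`: elements of the above form with `z₁ ≠ 0`,
`z₃/z₁ ∈ ℝ_{>0}` and `w/z₁ ∈ ℝ_{>0}`. -/
def rSlice : Set (Matrix (Fin 2) (Fin 2) (Quaternion ℝ)) :=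
  {σ | ∃ (x₁ x₂ : ℝ) (z₁ z₃ w : ℂ), z₁ ≠ 0 ∧
    (∃ r : ℝ, 0 < r ∧ z₃ = (r : ℂ) * z₁) ∧
    (∃ s : ℝ, 0 < s ∧ w = (s : ℂ) * z₁) ∧
    σ = sp2Elt x₁ x₂ z₁ z₃ w}

/-- The element `diag(e^{iθ}, e^{3iθ})` of the subgroup `K ⊂ Sp(2)`. -/
def diagK (θ : ℝ) : Matrix (Fin 2) (Fin 2) (Quaternion ℝ) :=
  Matrix.diagonal ![toQuat (Complex.exp ((θ : ℂ) * Complex.I)) 0,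
    toQuat (Complex.exp (3 * (θ : ℂ) * Complex.I)) 0]

/-- The finite subgroup `K_F = {diag(e^{iθ}, e^{3iθ}) : e^{8iθ} = 1} ≅ ℤ/8ℤ`. -/
def KF : Set (Matrix (Fin 2) (Fin 2) (Quaternion ℝ)) :=
  {A | ∃ θ : ℝ, Complex.exp (8 * (θ : ℂ) * Complex.I) = 1 ∧ A = diagK θ}

lemma toQuat_def (a b : ℂ) : toQuat a b = ⟨a.re, a.im, b.re, -b.im⟩ := by
  ext <;> simp only [toQuat, Quaternion.re_add, Quaternion.imI_add, Quaternion.imJ_add, Quaternion.imK_add, Quaternion.re_mul, Quaternion.imI_mul, Quaternion.imJ_mul, Quaternion.imK_mul] <;> simp [Cq, jq]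

lemma toQuat_mul (a b c d : ℂ) : toQuat a b * toQuat c d =
    toQuat (a*c - (starRingEnd ℂ b)*d) ((starRingEnd ℂ a)*d + b*c) := by
  ext <;> simp only [Quaternion.re_mul, Quaternion.imI_mul, Quaternion.imJ_mul, Quaternion.imK_mul] <;>
    simp [toQuat_def, Complex.mul_re, Complex.mul_im] <;> ring

lemma toQuat_inj {a b c d : ℂ} (h : toQuat a b = toQuat c d) : a = c ∧ b = d := by
  have h1 := congrArg QuaternionAlgebra.re h
  have h2 := congrArg QuaternionAlgebra.imI h
  have h3 := congrArg QuaternionAlgebra.imJ h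
  have h4 := congrArg QuaternionAlgebra.imK h
  simp only [toQuat_def] at h1 h2 h3 h4
  constructor <;> apply Complex.ext <;> simp_all

lemma conj_exp (t : ℝ) : (starRingEnd ℂ) (Complex.exp ((t:ℂ) * Complex.I)) =
    Complex.exp (-((t:ℂ) * Complex.I)) := by
  rw [← Complex.exp_conj]; simp

lemma conj_formula (θ x₁ x₂ : ℝ) (z₁ z₃ w : ℂ) :
    diagK θ * sp2Elt x₁ x₂ z₁ z₃ w * diagK (-θ) =
      sp2Elt x₁ x₂ (z₁ * Complex.exp (2*(θ:ℂ)*Complex.I)) (z₃ * Complex.exp (2*(θ:ℂ)*Complex.I))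
        (w * Complex.exp (-(6*(θ:ℂ))*Complex.I)) := by
  have hE0 : Complex.exp ((θ:ℂ)*Complex.I) ≠ 0 := Complex.exp_ne_zero _
  have e2 : Complex.exp (2*(θ:ℂ)*Complex.I) = Complex.exp ((θ:ℂ)*Complex.I) ^ 2 := by
    rw [show (2:ℂ)*(θ:ℂ)*Complex.I = (θ:ℂ)*Complex.I + (θ:ℂ)*Complex.I by ring, Complex.exp_add]; ring
  have e3 : Complex.exp (3*(θ:ℂ)*Complex.I) = Complex.exp ((θ:ℂ)*Complex.I) ^ 3 := by
    rw [show (3:ℂ)*(θ:ℂ)*Complex.I = ((θ:ℂ)*Complex.I + (θ:ℂ)*Complex.I) + (θ:ℂ)*Complex.I by ring,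
      Complex.exp_add, Complex.exp_add]; ring
  have e6 : Complex.exp (6*(θ:ℂ)*Complex.I) = Complex.exp ((θ:ℂ)*Complex.I) ^ 6 := by
    rw [show (6:ℂ)*(θ:ℂ)*Complex.I = 3*((θ:ℂ)*Complex.I) + 3*((θ:ℂ)*Complex.I) by ring,
      Complex.exp_add, show (3:ℂ)*((θ:ℂ)*Complex.I) = 3*(θ:ℂ)*Complex.I by ring, e3]; ring
  have e6' : Complex.exp (-(6*(θ:ℂ))*Complex.I) = (Complex.exp ((θ:ℂ)*Complex.I) ^ 6)⁻¹ := by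
    rw [show -(6*(θ:ℂ))*Complex.I = -(6*(θ:ℂ)*Complex.I) by ring, Complex.exp_neg, e6]
  have hcE : (starRingEnd ℂ) (Complex.exp ((θ:ℂ)*Complex.I)) = (Complex.exp ((θ:ℂ)*Complex.I))⁻¹ := by
    rw [conj_exp, Complex.exp_neg]
  refine Matrix.ext fun i j => ?_
  fin_cases i <;> fin_cases j <;>
    simp only [diagK, sp2Elt, Matrix.mul_apply, Fin.sum_univ_two, Matrix.diagonal,
      Matrix.cons_val', Matrix.cons_val_zero, Matrix.cons_val_one, Matrix.head_cons,
      Matrix.head_fin_const, Matrix.empty_val', Matrix.cons_val_fin_one, Fin.isValue,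
      Matrix.of_apply, toQuat_mul, conj_exp, map_zero, map_neg, _root_.map_mul, mul_zero, zero_mul,
      add_zero, zero_add, mul_neg, neg_mul, sub_zero, zero_sub, neg_neg,
      if_true, if_false, ne_eq, one_ne_zero, zero_ne_one, not_false_iff,
      Fin.mk_one, Fin.mk_zero, ite_true, ite_false] <;>
    · congr 1 <;>
      · push_cast
        try simp only [e6', Complex.exp_neg, e2, e3, e6, map_pow, hcE, _root_.map_mul, map_neg, inv_pow, mul_neg, neg_mul]
        field_simp [Complex.exp_neg, e2, e3, e6, hcE]
        try ring
        try tauto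

lemma diagK_mul (a b : ℝ) : diagK a * diagK b = diagK (a + b) := by
  rw [diagK, diagK, diagK, Matrix.diagonal_mul_diagonal]
  refine congrArg Matrix.diagonal ?_
  funext i
  fin_cases i <;>
    · simp [toQuat_mul]
      rw [← Complex.exp_add]
      congr 1
      push_cast
      ring

lemma sp2Elt_eq {x₁ x₂ y₁ y₂ : ℝ} {z₁ z₃ w u₁ u₃ v : ℂ}
    (h : sp2Elt x₁ x₂ z₁ z₃ w = sp2Elt y₁ y₂ u₁ u₃ v) : z₁ = u₁ ∧ w = v := by
  have h10 := congrFun (congrFun h 1) 0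
  have h11 := congrFun (congrFun h 1) 1
  simp only [sp2Elt, Matrix.cons_val', Matrix.cons_val_zero, Matrix.cons_val_one,
    Matrix.head_cons, Matrix.empty_val', Matrix.cons_val_fin_one, Matrix.of_apply] at h10 h11
  exact ⟨(toQuat_inj h10).1, (toQuat_inj h11).2⟩

lemma exp_eight (θ : ℝ) : Complex.exp (8*(θ:ℂ)*Complex.I) = Complex.exp (2*(θ:ℂ)*Complex.I) *
    Complex.exp (6*(θ:ℂ)*Complex.I) := by
  rw [← Complex.exp_add]; congr 1; ring

/-- `w * exp(-(6θ)i) = s * (z₁ * exp(2θi))` iff `w = s * z₁ * exp(8θi)`. -/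
lemma key_shift (θ s : ℝ) (z₁ w : ℂ)
    (h : w * Complex.exp (-(6*(θ:ℂ))*Complex.I) = (s:ℂ) * (z₁ * Complex.exp (2*(θ:ℂ)*Complex.I))) :
    w = (s:ℂ) * z₁ * Complex.exp (8*(θ:ℂ)*Complex.I) := by
  have h6 : Complex.exp (-(6*(θ:ℂ))*Complex.I) = (Complex.exp (6*(θ:ℂ)*Complex.I))⁻¹ := by
    rw [show -(6*(θ:ℂ))*Complex.I = -(6*(θ:ℂ)*Complex.I) by ring, Complex.exp_neg]
  rw [h6] at h
  have h60 : Complex.exp (6*(θ:ℂ)*Complex.I) ≠ 0 := Complex.exp_ne_zero _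
  field_simp at h
  rw [exp_eight, h]; ring

theorem conjugate_into_r_exists_unique_up_to_KF
    (x₁ x₂ : ℝ) (z₁ z₃ w : ℂ) (hz₁ : z₁ ≠ 0)
    (hz₃ : ∃ r : ℝ, 0 < r ∧ z₃ = (r : ℂ) * z₁) (hw : w ≠ 0) :
    (∃ θ : ℝ, diagK θ * sp2Elt x₁ x₂ z₁ z₃ w * diagK (-θ) ∈ rSlice) ∧
    (∀ θ θ' : ℝ,
      diagK θ * sp2Elt x₁ x₂ z₁ z₃ w * diagK (-θ) ∈ rSlice →
      diagK θ' * sp2Elt x₁ x₂ z₁ z₃ w * diagK (-θ') ∈ rSlice →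
      ∃ B ∈ KF, diagK θ' = B * diagK θ) := by
  set u : ℂ := w / z₁ with hu_def
  have hu : u ≠ 0 := div_ne_zero hw hz₁
  constructor
  · -- existence
    refine ⟨u.arg / 8, ?_⟩
    rw [conj_formula]
    set θ : ℝ := u.arg / 8 with hθ
    refine ⟨x₁, x₂, z₁ * Complex.exp (2*(θ:ℂ)*Complex.I), z₃ * Complex.exp (2*(θ:ℂ)*Complex.I),
      w * Complex.exp (-(6*(θ:ℂ))*Complex.I),
      mul_ne_zero hz₁ (Complex.exp_ne_zero _), ?_, ?_, rfl⟩
    · obtain ⟨r, hr, hrz⟩ := hz₃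
      exact ⟨r, hr, by rw [hrz]; ring⟩
    · refine ⟨‖u‖, norm_pos_iff.mpr hu, ?_⟩
      have key : (‖u‖ : ℂ) * Complex.exp ((u.arg:ℂ)*Complex.I) = u :=
        Complex.norm_mul_exp_arg_mul_I u
      have h8 : (8:ℂ)*(θ:ℂ)*Complex.I = (u.arg:ℂ)*Complex.I := by
        rw [hθ]; push_cast; ring
      have hw8 : w = (‖u‖ : ℂ) * z₁ * Complex.exp (8*(θ:ℂ)*Complex.I) := by
        rw [h8, mul_assoc, mul_comm (z₁) _, ← mul_assoc, key, hu_def]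
        field_simp
      have h6 : Complex.exp (-(6*(θ:ℂ))*Complex.I) = (Complex.exp (6*(θ:ℂ)*Complex.I))⁻¹ := by
        rw [show -(6*(θ:ℂ))*Complex.I = -(6*(θ:ℂ)*Complex.I) by ring, Complex.exp_neg]
      rw [hw8, exp_eight, h6]
      have h60 : Complex.exp (6*(θ:ℂ)*Complex.I) ≠ 0 := Complex.exp_ne_zero _
      field_simp
  · -- uniqueness
    intro θ θ' m m'
    rw [conj_formula] at m m'
    obtain ⟨a₁, a₂, za1, za3, wa, -, -, ⟨s, hs, hws⟩, heq⟩ := m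
    obtain ⟨b₁, b₂, zb1, zb3, wb, -, -, ⟨s', hs', hws'⟩, heq'⟩ := m'
    obtain ⟨hz, hwq⟩ := sp2Elt_eq heq
    obtain ⟨hz', hwq'⟩ := sp2Elt_eq heq'
    rw [hws, ← hz] at hwq
    rw [hws', ← hz'] at hwq'
    have k1 : w = (s:ℂ) * z₁ * Complex.exp (8*(θ:ℂ)*Complex.I) := key_shift θ s z₁ w hwq
    have k2 : w = (s':ℂ) * z₁ * Complex.exp (8*(θ':ℂ)*Complex.I) := key_shift θ' s' z₁ w hwq'
    -- s = s'
    have habs : ∀ t : ℝ, ‖Complex.exp (8*(t:ℂ)*Complex.I)‖ = 1 := by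
      intro t
      rw [show (8:ℂ)*(t:ℂ)*Complex.I = ((8*t : ℝ):ℂ)*Complex.I by push_cast; ring]
      exact Complex.norm_exp_ofReal_mul_I _
    have hss' : s = s' := by
      have := congrArg norm (k1.symm.trans k2)
      simp only [norm_mul, habs, mul_one, Complex.norm_real, Real.norm_eq_abs,
        abs_of_pos hs, abs_of_pos hs'] at this
      exact mul_right_cancel₀ (norm_ne_zero_iff.mpr hz₁) this
    have hexp : Complex.exp (8*(θ':ℂ)*Complex.I) = Complex.exp (8*(θ:ℂ)*Complex.I) := by
      have h := k2.symm.trans k1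
      rw [hss'] at h
      have hs0 : (s':ℂ) ≠ 0 := by exact_mod_cast ne_of_gt hs'
      exact mul_left_cancel₀ (mul_ne_zero hs0 hz₁) (by linear_combination h)
    refine ⟨diagK (θ' - θ), ⟨θ' - θ, ?_, rfl⟩, ?_⟩
    · rw [show (8:ℂ)*((θ' - θ : ℝ):ℂ)*Complex.I = 8*(θ':ℂ)*Complex.I - 8*(θ:ℂ)*Complex.I by
        push_cast; ring, Complex.exp_sub, hexp]
      field_simp
    · rw [diagK_mul, sub_add_cancel]
end
end

section
/- Let k, m ∈ ℝ and let Z = (Z₀, Z₁, Z₂, Z₃) ∈ ℂ⁴ with |Z₀|² + |Z₁|² + |Z₂|² + |Z₃|² = 1. In ℍ = ℂ ⊕ jℂ set h₁ = Z₀ + jZ₁, h₂ = Z₂ + jZ₃ and q₁ = conj(h₁)·(ik)·h₁ + conj(h₂)·(im)·h₂. Then the jℂ-component of the quaternion q₁ has squared modulus |(q₁)_{jℂ}|² = 4|k Z₀Z₁ + m Z₂Z₃|². In particular q₁ ∈ ℂ if and only if k Z₀Z₁ + m Z₂Z₃ = 0. -/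
noncomputable section

/-- The `jℂ`-component of a quaternion: if `q = a + j b` with `a, b ∈ ℂ`, this is `b`. -/
def jPart (q : Quaternion ℝ) : ℂ := ⟨q.imJ, -q.imK⟩

@[simp] lemma Cq_re (a : ℂ) : (Cq a).re = a.re := rfl
@[simp] lemma Cq_imI (a : ℂ) : (Cq a).imI = a.im := rfl
@[simp] lemma Cq_imJ (a : ℂ) : (Cq a).imJ = 0 := rfl
@[simp] lemma Cq_imK (a : ℂ) : (Cq a).imK = 0 := rfl
@[simp] lemma jq_re : jq.re = 0 := rfl
@[simp] lemma jq_imI : jq.imI = 0 := rfl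
@[simp] lemma jq_imJ : jq.imJ = 1 := rfl
@[simp] lemma jq_imK : jq.imK = 0 := rfl

lemma jPart_single (c : ℝ) (Z₀ Z₁ : ℂ) :
    jPart (star (toQuat Z₀ Z₁) * toQuat ((c : ℂ) * Complex.I) 0 * toQuat Z₀ Z₁) =
      -2 * Complex.I * ((c : ℂ) * Z₀ * Z₁) := by
  apply Complex.ext <;>
  · simp only [jPart, toQuat, Cq_re, Cq_imI, Cq_imJ, Cq_imK, jq_re, jq_imI, jq_imJ, jq_imK, Quaternion.re_mul, Quaternion.imI_mul,
      Quaternion.imJ_mul, Quaternion.imK_mul, Quaternion.imI_star, Quaternion.imJ_star,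
      Quaternion.imK_star, Quaternion.re_star, Quaternion.re_add, Quaternion.imI_add,
      Quaternion.imJ_add, Quaternion.imK_add, Complex.mul_re, Complex.mul_im,
      Complex.I_re, Complex.I_im, Complex.ofReal_re, Complex.ofReal_im,
      Complex.neg_re, Complex.neg_im, Complex.re_ofNat, Complex.im_ofNat, Complex.zero_re, Complex.zero_im]
    ring

lemma jPart_add (p q : Quaternion ℝ) : jPart (p + q) = jPart p + jPart q := by
  simp [jPart, Complex.ext_iff]; ring

theorem vertical_norm_of_killing_field
    (k m : ℝ) (Z₀ Z₁ Z₂ Z₃ : ℂ)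
    (hZ : ‖Z₀‖ ^ 2 + ‖Z₁‖ ^ 2 +
      ‖Z₂‖ ^ 2 + ‖Z₃‖ ^ 2 = 1) :
    ‖jPart
        (star (toQuat Z₀ Z₁) * toQuat ((k : ℂ) * Complex.I) 0 * toQuat Z₀ Z₁ +
          star (toQuat Z₂ Z₃) * toQuat ((m : ℂ) * Complex.I) 0 * toQuat Z₂ Z₃)‖ ^ 2 =
      4 * ‖(k : ℂ) * Z₀ * Z₁ + (m : ℂ) * Z₂ * Z₃‖ ^ 2 ∧
    (jPart
        (star (toQuat Z₀ Z₁) * toQuat ((k : ℂ) * Complex.I) 0 * toQuat Z₀ Z₁ +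
          star (toQuat Z₂ Z₃) * toQuat ((m : ℂ) * Complex.I) 0 * toQuat Z₂ Z₃) = 0 ↔
      (k : ℂ) * Z₀ * Z₁ + (m : ℂ) * Z₂ * Z₃ = 0) := by
  rw [jPart_add, jPart_single, jPart_single, ← mul_add]
  constructor
  · rw [norm_mul, mul_pow]
    have h2 : ‖-2 * Complex.I‖ = 2 := by simp
    rw [h2]; ring
  · constructor
    · intro h
      rcases mul_eq_zero.1 h with h' | h'
      · exfalso
        simp [Complex.ext_iff] at h'
      · exact h'
    · intro h; rw [h, mul_zero]
end
end

section
/- Let k, m be real numbers with 0 < m < k. Then the set {(v, r) ∈ ℝ² : v > 0, (k² − m²)² ≤ 8v(k² + m² − 2v − r²/2) and 8v(k² + m² − 2v − r²/2) ≤ (k² + m²)²} is homeomorphic to the closed unit disk in ℝ². -/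
noncomputable section

open Metric Set Bornology

set_option maxHeartbeats 1000000 in
theorem aux_convex_body_homeo (S : Set (ℝ × ℝ)) (hconv : Convex ℝ S) (hclosed : IsClosed S)
    (hbounded : IsBounded S) (hint : (interior S).Nonempty) :
    Nonempty (↥S ≃ₜ ↥(Metric.closedBall (0 : EuclideanSpace ℝ (Fin 2)) 1)) := by
  let e : (ℝ × ℝ) ≃L[ℝ] EuclideanSpace ℝ (Fin 2) :=
    ((LinearEquiv.finTwoArrow ℝ ℝ).symm.toContinuousLinearEquiv).trans
      (EuclideanSpace.equiv (Fin 2) ℝ).symm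
  set T : Set (EuclideanSpace ℝ (Fin 2)) := (e : (ℝ × ℝ) → EuclideanSpace ℝ (Fin 2)) '' S with hT
  have hTconv : Convex ℝ T := hconv.linear_image (e : (ℝ × ℝ) →ₗ[ℝ] EuclideanSpace ℝ (Fin 2))
  have hScomp : IsCompact S := Metric.isCompact_of_isClosed_isBounded hclosed hbounded
  have hTcomp : IsCompact T := hScomp.image e.continuous
  have hTclosed : IsClosed T := hTcomp.isClosed
  have hTbd : IsBounded T := hTcomp.isBounded
  have hTint : (interior T).Nonempty := by
    obtain ⟨x, hx⟩ := hint
    exact ⟨e x, e.toHomeomorph.isOpenMap.image_interior_subset S ⟨x, hx, rfl⟩⟩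
  obtain ⟨h, -, hcl, -⟩ :=
    exists_homeomorph_image_interior_closure_frontier_eq_unitBall hTconv hTint hTbd
  rw [hTclosed.closure_eq] at hcl
  exact ⟨((e.toHomeomorph.image S).trans (h.image T)).trans (Homeomorph.setCongr hcl)⟩

set_option maxHeartbeats 1000000 in
theorem preimage_l4_is_closed_disk
    (k m : ℝ) (hm : 0 < m) (hmk : m < k) :
    Nonempty
      (↥{p : ℝ × ℝ | 0 < p.1 ∧
          (k ^ 2 - m ^ 2) ^ 2 ≤ 8 * p.1 * (k ^ 2 + m ^ 2 - 2 * p.1 - p.2 ^ 2 / 2) ∧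
          8 * p.1 * (k ^ 2 + m ^ 2 - 2 * p.1 - p.2 ^ 2 / 2) ≤ (k ^ 2 + m ^ 2) ^ 2} ≃ₜ
        ↥(Metric.closedBall (0 : EuclideanSpace ℝ (Fin 2)) 1)) := by
  set A : ℝ := k ^ 2 + m ^ 2 with hA
  set c : ℝ := (k ^ 2 - m ^ 2) ^ 2 with hc
  have hA0 : 0 < A := by positivity
  have hc0 : 0 < c := by
    have : 0 < k ^ 2 - m ^ 2 := by nlinarith
    positivity
  have hk : 0 < k := hm.trans hmk
  have hcA : c < A ^ 2 := by
    rw [hc, hA]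
    nlinarith [mul_pos (mul_pos hm hm) (mul_pos hk hk)]
  set S : Set (ℝ × ℝ) := {p : ℝ × ℝ | 0 < p.1 ∧
      c ≤ 8 * p.1 * (A - 2 * p.1 - p.2 ^ 2 / 2) ∧
      8 * p.1 * (A - 2 * p.1 - p.2 ^ 2 / 2) ≤ A ^ 2} with hS
  -- upper bound is automatic for p.1 > 0
  have hupper : ∀ v r : ℝ, 0 < v → 8 * v * (A - 2 * v - r ^ 2 / 2) ≤ A ^ 2 := by
    intro v r hv
    nlinarith [sq_nonneg (A - 4 * v), mul_nonneg hv.le (sq_nonneg r)]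
  have hmem : ∀ p : ℝ × ℝ, p ∈ S ↔ 0 < p.1 ∧ c ≤ 8 * p.1 * (A - 2 * p.1 - p.2 ^ 2 / 2) := by
    intro p
    constructor
    · rintro ⟨h1, h2, _⟩; exact ⟨h1, h2⟩
    · rintro ⟨h1, h2⟩; exact ⟨h1, h2, hupper _ _ h1⟩
  -- basic bounds from membership
  have hbd : ∀ p ∈ S, p.1 ≤ A / 2 ∧ p.2 ^ 2 ≤ 2 * A := by
    rintro p ⟨h1, h2, _⟩
    constructor
    · nlinarith [sq_nonneg p.2, mul_pos h1 h1]
    · nlinarith [mul_pos h1 h1]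
  -- convexity
  have hconv : Convex ℝ S := by
    rintro p hp q hq a b ha hb hab
    obtain ⟨hp1, hp2⟩ := (hmem p).1 hp
    obtain ⟨hq1, hq2⟩ := (hmem q).1 hq
    have hv : 0 < a * p.1 + b * q.1 := by
      rcases eq_or_lt_of_le ha with h | h
      · have hb1 : b = 1 := by linarith
        simpa [← h, hb1] using hq1
      · nlinarith [mul_nonneg hb hq1.le]
    rw [hmem]
    refine ⟨by simpa using hv, ?_⟩
    have key1 : c / (8 * p.1) ≤ A - 2 * p.1 - p.2 ^ 2 / 2 := by
      rw [div_le_iff₀ (by positivity)]; linarith [hp2]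
    have key2 : c / (8 * q.1) ≤ A - 2 * q.1 - q.2 ^ 2 / 2 := by
      rw [div_le_iff₀ (by positivity)]; linarith [hq2]
    set x : ℝ := c / (8 * p.1) with hxdef
    set y : ℝ := c / (8 * q.1) with hydef
    have hx : x * (8 * p.1) = c := div_mul_cancel₀ c (by positivity)
    have hy : y * (8 * q.1) = c := div_mul_cancel₀ c (by positivity)
    have hxy : 0 ≤ (x - y) * (q.1 - p.1) := by
      rcases le_total p.1 q.1 with hle | hle
      · have hyx : y ≤ x := by rw [hxdef, hydef]; gcongr
        exact mul_nonneg (by linarith) (by linarith)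
      · have hyx : x ≤ y := by rw [hxdef, hydef]; gcongr
        nlinarith [mul_nonneg (show (0:ℝ) ≤ y - x by linarith) (show (0:ℝ) ≤ p.1 - q.1 by linarith)]
    have keyid : (a * x + b * y) * (8 * (a * p.1 + b * q.1)) - c =
        8 * a * b * ((x - y) * (q.1 - p.1)) := by
      linear_combination (a * (a + b)) * hx + (b * (a + b)) * hy + (c * (a + b + 1)) * hab
    have I1 : c / (8 * (a * p.1 + b * q.1)) ≤ a * x + b * y := by
      rw [div_le_iff₀ (by positivity)]
      have hnn := mul_nonneg (show (0:ℝ) ≤ 8 * a * b by positivity) hxy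
      linarith
    have I2 : (a * p.2 + b * q.2) ^ 2 ≤ a * p.2 ^ 2 + b * q.2 ^ 2 := by
      nlinarith [mul_nonneg (mul_nonneg ha hb) (sq_nonneg (p.2 - q.2))]
    have key : c / (8 * (a * p.1 + b * q.1)) ≤
        A - 2 * (a * p.1 + b * q.1) - (a * p.2 + b * q.2) ^ 2 / 2 := by
      have t1 : a * x ≤ a * (A - 2 * p.1 - p.2 ^ 2 / 2) :=
        mul_le_mul_of_nonneg_left key1 ha
      have t2 : b * y ≤ b * (A - 2 * q.1 - q.2 ^ 2 / 2) :=
        mul_le_mul_of_nonneg_left key2 hb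
      have hAeq : a * A + b * A = A := by rw [← add_mul, hab, one_mul]
      nlinarith [I1, I2, t1, t2]
    have := (div_le_iff₀ (show (0:ℝ) < 8 * (a * p.1 + b * q.1) by positivity)).1 key
    have goal : c ≤ 8 * (a * p.1 + b * q.1) *
        (A - 2 * (a * p.1 + b * q.1) - (a * p.2 + b * q.2) ^ 2 / 2) := by nlinarith [this]
    simpa [Prod.smul_def, smul_eq_mul] using goal
  have c1 : Continuous fun p : ℝ × ℝ => p.1 := continuous_fst
  have c2 : Continuous fun p : ℝ × ℝ => 8 * p.1 * (A - 2 * p.1 - p.2 ^ 2 / 2) := by fun_prop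
  -- closedness
  have hclosed : IsClosed S := by
    have hSeq : S = {p : ℝ × ℝ | 0 ≤ p.1} ∩
        ({p : ℝ × ℝ | c ≤ 8 * p.1 * (A - 2 * p.1 - p.2 ^ 2 / 2)} ∩
         {p : ℝ × ℝ | 8 * p.1 * (A - 2 * p.1 - p.2 ^ 2 / 2) ≤ A ^ 2}) := by
      ext p
      simp only [hS, mem_setOf_eq, mem_inter_iff]
      constructor
      · rintro ⟨h1, h2, h3⟩; exact ⟨h1.le, h2, h3⟩
      · rintro ⟨h1, h2, h3⟩
        rcases eq_or_lt_of_le h1 with h0 | h0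
        · exfalso
          rw [← h0] at h2
          norm_num at h2
          linarith
        · exact ⟨h0, h2, h3⟩
    rw [hSeq]
    exact (isClosed_le continuous_const c1).inter
      ((isClosed_le continuous_const c2).inter (isClosed_le c2 continuous_const))
  -- boundedness
  have hbounded : IsBounded S := by
    apply (isBounded_closedBall (x := (0 : ℝ × ℝ)) (r := A + 1)).subset
    intro p hp
    obtain ⟨hb1, hb2⟩ := hbd p hp
    have h1 : 0 < p.1 := hp.1
    rw [mem_closedBall_zero_iff, Prod.norm_def]
    apply max_le
    · rw [Real.norm_eq_abs, abs_le]; constructor <;> nlinarith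
    · rw [Real.norm_eq_abs, abs_le]; constructor <;> nlinarith [sq_nonneg (A - 1), sq_nonneg p.2]
  -- nonempty interior
  have hint : (interior S).Nonempty := by
    refine ⟨(A / 4, 0), ?_⟩
    rw [mem_interior]
    refine ⟨{p : ℝ × ℝ | 0 < p.1} ∩ {p : ℝ × ℝ | c < 8 * p.1 * (A - 2 * p.1 - p.2 ^ 2 / 2)},
      ?_, ?_, ?_⟩
    · rintro p ⟨h1, h2⟩
      exact ⟨h1, le_of_lt h2, hupper _ _ h1⟩
    · exact (isOpen_lt continuous_const c1).inter (isOpen_lt continuous_const c2)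
    · constructor
      · show (0:ℝ) < A / 4
        positivity
      · show c < 8 * (A / 4) * (A - 2 * (A / 4) - (0:ℝ) ^ 2 / 2)
        nlinarith
  exact aux_convex_body_homeo S hconv hclosed hbounded hint
end
end
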